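/- Suppose an m×m matrix X satisfies (i) 𝒢(X) ≥ 0, (ii) 0 ≤ X ≤ G, and (iii) I − Σ_{v=1}^{N} Σ_{j=0}^{v-1} (X^{v-1-j})ᵀ ⊗ (A_v X^{j}) is a nonsingular M-matrix. Let Z be an m×m matrix with 0 ≤ Z ≤ X, and let Y be an m×m matrix satisfying Σ_{v=1}^{N} Σ_{j=0}^{v-1} A_v Z^{j} (Y − X) Z^{v-1-j} − (Y − X) = −𝒢(X). Then 𝒢(Y) ≥ 0. -/

import Mathlib

open Matrix Finset Kronecker
open scoped ENNReal

/-- Spectral radius of a real matrix: the spectral radius of its complexification. -/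
noncomputable def specRad {n : Type*} [Fintype n] [DecidableEq n] (B : Matrix n n ℝ) : ℝ≥0∞ :=
  spectralRadius ℂ (B.map (algebraMap ℝ ℂ))

/-- `M` is a nonsingular M-matrix: a Z-matrix of the form `s • I - B` with `B ≥ 0`
entrywise and `s` greater than the spectral radius of `B`. -/
def IsNonsingMMatrix {n : Type*} [Fintype n] [DecidableEq n] (M : Matrix n n ℝ) : Prop :=
  (∀ i j, i ≠ j → M i j ≤ 0) ∧
  ∃ s : ℝ, ∃ B : Matrix n n ℝ, (∀ i j, 0 ≤ B i j) ∧
    M = s • (1 : Matrix n n ℝ) - B ∧ specRad B < ENNReal.ofReal s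

open Filter Topology

set_option linter.unusedSectionVars false
set_option maxHeartbeats 1000000

namespace Stmt6Aux

attribute [local instance] Matrix.linftyOpNormedRing Matrix.linftyOpNormedAlgebra

variable {n : Type*} [Fintype n] [DecidableEq n]

variable {n : Type*} [Fintype n] [DecidableEq n]

lemma mulPos {A B : Matrix n n ℝ} (hA : ∀ i j, 0 ≤ A i j) (hB : ∀ i j, 0 ≤ B i j) :
    ∀ i j, 0 ≤ (A * B) i j := by
  intro i j
  rw [Matrix.mul_apply]
  exact Finset.sum_nonneg fun k _ => mul_nonneg (hA i k) (hB k j)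

lemma mulMonoL {A B C : Matrix n n ℝ} (hA : ∀ i j, 0 ≤ A i j) (h : ∀ i j, B i j ≤ C i j) :
    ∀ i j, (A * B) i j ≤ (A * C) i j := by
  intro i j
  rw [Matrix.mul_apply, Matrix.mul_apply]
  exact Finset.sum_le_sum fun k _ => mul_le_mul_of_nonneg_left (h k j) (hA i k)

lemma mulMonoR {B C D : Matrix n n ℝ} (h : ∀ i j, B i j ≤ C i j) (hD : ∀ i j, 0 ≤ D i j) :
    ∀ i j, (B * D) i j ≤ (C * D) i j := by
  intro i j
  rw [Matrix.mul_apply, Matrix.mul_apply]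
  exact Finset.sum_le_sum fun k _ => mul_le_mul_of_nonneg_right (h i k) (hD k j)

lemma powPos {A : Matrix n n ℝ} (hA : ∀ i j, 0 ≤ A i j) :
    ∀ k, ∀ i j, 0 ≤ (A ^ k) i j := by
  intro k
  induction k with
  | zero =>
    intro i j
    rw [pow_zero]
    by_cases h : i = j <;> simp [Matrix.one_apply, h]
  | succ k ih =>
    rw [pow_succ]
    exact mulPos ih hA

lemma powMono {Z X : Matrix n n ℝ} (hZ0 : ∀ i j, 0 ≤ Z i j) (hZX : ∀ i j, Z i j ≤ X i j) :
    ∀ k, ∀ i j, (Z ^ k) i j ≤ (X ^ k) i j := by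
  have hX0 : ∀ i j, 0 ≤ X i j := fun i j => (hZ0 i j).trans (hZX i j)
  intro k
  induction k with
  | zero => intro i j; simp
  | succ k ih =>
    intro i j
    rw [pow_succ, pow_succ]
    exact ((mulMonoL (powPos hZ0 k) hZX) i j).trans ((mulMonoR ih hX0) i j)

lemma sumPos {β : Type*} {s : Finset β} {f : β → Matrix n n ℝ}
    (h : ∀ b ∈ s, ∀ i j, 0 ≤ f b i j) : ∀ i j, 0 ≤ (∑ b ∈ s, f b) i j := by
  intro i j
  rw [Matrix.sum_apply]
  exact Finset.sum_nonneg fun b hb => h b hb i j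

lemma sumMono {β : Type*} {s : Finset β} {f g : β → Matrix n n ℝ}
    (h : ∀ b ∈ s, ∀ i j, f b i j ≤ g b i j) :
    ∀ i j, (∑ b ∈ s, f b) i j ≤ (∑ b ∈ s, g b) i j := by
  intro i j
  rw [Matrix.sum_apply, Matrix.sum_apply]
  exact Finset.sum_le_sum fun b hb => h b hb i j

/-- key binomial-type lower bound: `(X+E)^v ≥ X^v + ∑_{k<v} X^k E X^(v-1-k)`. -/
lemma pow_add_lower {X E : Matrix n n ℝ} (hX : ∀ i j, 0 ≤ X i j) (hE : ∀ i j, 0 ≤ E i j) :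
    ∀ v, ∀ i j,
      (X ^ v + ∑ k ∈ Finset.range v, X ^ k * E * X ^ (v - 1 - k)) i j ≤ ((X + E) ^ v) i j := by
  intro v
  induction v with
  | zero => intro i j; simp
  | succ v ih =>
    set S : Matrix n n ℝ := X ^ v + ∑ k ∈ Finset.range v, X ^ k * E * X ^ (v - 1 - k) with hSdef
    have hterm : ∀ b ∈ Finset.range v, ∀ i j, 0 ≤ (X ^ b * E * X ^ (v - 1 - b)) i j :=
      fun b _ => mulPos (mulPos (powPos hX b) hE) (powPos hX _)
    have hS0 : ∀ i j, 0 ≤ S i j := by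
      intro i j
      rw [hSdef, Matrix.add_apply]
      exact add_nonneg (powPos hX v i j) (sumPos hterm i j)
    have hXvS : ∀ i j, (X ^ v) i j ≤ S i j := by
      intro i j
      rw [hSdef, Matrix.add_apply]
      exact le_add_of_nonneg_right (sumPos hterm i j)
    have hXE0 : ∀ i j, 0 ≤ (X + E) i j := by
      intro i j; rw [Matrix.add_apply]; exact add_nonneg (hX i j) (hE i j)
    -- algebraic identity
    have hid : X ^ (v + 1) + ∑ k ∈ Finset.range (v + 1), X ^ k * E * X ^ (v + 1 - 1 - k)
        = X * S + E * X ^ v := by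
      have h1 : ∑ k ∈ Finset.range (v + 1), X ^ k * E * X ^ (v - k)
          = (∑ k ∈ Finset.range v, X ^ (k + 1) * E * X ^ (v - (k + 1))) + X ^ 0 * E * X ^ (v - 0) :=
        Finset.sum_range_succ' (fun k => X ^ k * E * X ^ (v - k)) v
      have h2 : ∀ k ∈ Finset.range v,
          X ^ (k + 1) * E * X ^ (v - (k + 1)) = X * (X ^ k * E * X ^ (v - 1 - k)) := by
        intro k hk
        have : v - (k + 1) = v - 1 - k := by omega
        rw [this, pow_succ']
        noncomm_ring
      have h3 : ∀ k, v + 1 - 1 - k = v - k := fun k => by omega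
      simp only [h3, h1, Finset.sum_congr rfl h2, pow_zero, one_mul, Nat.sub_zero]
      rw [hSdef, mul_add, Finset.mul_sum, pow_succ']
      exact (add_assoc _ _ _).symm
    intro i j
    rw [hid]
    calc (X * S + E * X ^ v) i j
        ≤ (X * S + E * S) i j := by
          rw [Matrix.add_apply, Matrix.add_apply]
          exact add_le_add le_rfl (mulMonoL hE hXvS i j)
      _ = ((X + E) * S) i j := by rw [← add_mul]
      _ ≤ ((X + E) * (X + E) ^ v) i j := mulMonoL hXE0 ih i j
      _ = ((X + E) ^ (v + 1)) i j := by rw [← pow_succ']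


attribute [local instance] Matrix.linftyOpNormedRing Matrix.linftyOpNormedAlgebra

variable {n : Type*} [Fintype n] [DecidableEq n]


/-- eventual geometric entry bound from the spectral radius hypothesis -/
lemma entry_bound (B : Matrix n n ℝ) (hB0 : ∀ i j, 0 ≤ B i j) {s : ℝ}
    (hs : specRad B < ENNReal.ofReal s) :
    ∃ t : ℝ, 0 ≤ t ∧ t < s ∧ ∃ n₀ : ℕ, ∀ k ≥ n₀, ∀ i j, (B ^ k) i j ≤ t ^ k := by
  haveI : CompleteSpace (Matrix n n ℂ) :=
    FiniteDimensional.complete ℂ (Matrix n n ℂ)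
  set a : Matrix n n ℂ := B.map (algebraMap ℝ ℂ) with ha
  have hG := spectrum.pow_nnnorm_pow_one_div_tendsto_nhds_spectralRadius a
  obtain ⟨c, hc1, hc2⟩ := exists_between hs
  have hcne : c ≠ ⊤ := (hc2.trans_le le_top).ne
  have hev : ∀ᶠ k : ℕ in atTop, (‖a ^ k‖₊ : ℝ≥0∞) ^ (1 / (k : ℝ)) < c :=
    hG.eventually_lt_const hc1
  obtain ⟨n₀, hn₀⟩ := (Filter.eventually_atTop).mp hev
  refine ⟨c.toReal, ENNReal.toReal_nonneg, ?_, max n₀ 1, ?_⟩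
  · exact (ENNReal.toReal_lt_toReal hcne ENNReal.ofReal_ne_top).mpr hc2
      |>.trans_le (le_of_eq (ENNReal.toReal_ofReal ((ENNReal.ofReal_pos.mp
        (zero_le.trans_lt hs)).le)))
  · intro k hk i j
    have hk1 : 1 ≤ k := le_trans (le_max_right _ _) hk
    have hkn : (k : ℝ) ≠ 0 := by positivity
    have h1 : (‖a ^ k‖₊ : ℝ≥0∞) ^ (1 / (k : ℝ)) < c := hn₀ k (le_trans (le_max_left _ _) hk)
    have h2 : (‖a ^ k‖₊ : ℝ≥0∞) ≤ c ^ k := by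
      have := ENNReal.rpow_le_rpow h1.le (by positivity : (0:ℝ) ≤ (k:ℝ))
      rwa [← ENNReal.rpow_mul, one_div, inv_mul_cancel₀ hkn, ENNReal.rpow_one,
        ENNReal.rpow_natCast] at this
    -- entry bound
    have hBk0 : ∀ i j, 0 ≤ (B ^ k) i j := powPos hB0 k
    have hmap : a ^ k = (B ^ k).map (algebraMap ℝ ℂ) := by
      rw [ha, ← RingHom.mapMatrix_apply, ← map_pow, RingHom.mapMatrix_apply]
    have hentry : ‖(a ^ k) i j‖₊ ≤ ‖a ^ k‖₊ := by
      rw [Matrix.linfty_opNNNorm_def]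
      calc ‖(a ^ k) i j‖₊
          ≤ ∑ l, ‖(a ^ k) i l‖₊ :=
            Finset.single_le_sum (f := fun l => ‖(a ^ k) i l‖₊) (fun _ _ => zero_le)
              (Finset.mem_univ j)
        _ ≤ _ := Finset.le_sup (f := fun r => ∑ l, ‖(a ^ k) r l‖₊) (Finset.mem_univ i)
    have hBk : (B ^ k) i j = ‖(a ^ k) i j‖ := by
      rw [hmap, Matrix.map_apply]
      rw [Complex.coe_algebraMap, Complex.norm_real]
      exact (abs_of_nonneg (hBk0 i j)).symm
    rw [hBk]
    have : (‖(a ^ k) i j‖₊ : ℝ≥0∞) ≤ c ^ k := le_trans (by exact_mod_cast hentry) h2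
    have h4 : ‖(a ^ k) i j‖ ≤ (c ^ k).toReal := by
      have := ENNReal.toReal_mono (by simp [ENNReal.pow_ne_top hcne]) this
      simpa using this
    simpa [ENNReal.toReal_pow] using h4



/-- The core convergence lemma: if `1 - L = s•1 - B` with `B ≥ 0`, `L ≥ 0` and
`specRad B < s`, then the powers of `L` tend to zero entrywise. -/
lemma pow_tendsto_zero (L : Matrix n n ℝ) (hL0 : ∀ i j, 0 ≤ L i j)
    (s : ℝ) (B : Matrix n n ℝ) (hB0 : ∀ i j, 0 ≤ B i j)
    (hEq : (1 : Matrix n n ℝ) - L = s • 1 - B)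
    (hs : specRad B < ENNReal.ofReal s) :
    ∀ i j, Tendsto (fun k => (L ^ k) i j) atTop (𝓝 0) := by
  have hs0 : 0 < s := ENNReal.ofReal_pos.mp (zero_le.trans_lt hs)
  obtain ⟨t, ht0, hts, n₀, hb⟩ := entry_bound B hB0 hs
  -- summability of the Neumann series entries
  have hgeo : Summable (fun k : ℕ => (t / s) ^ k) :=
    summable_geometric_of_lt_one (by positivity) (by
      rw [div_lt_one hs0]; exact hts)
  have hsum : ∀ (i j : n) (c : ℕ), Summable (fun k : ℕ => (B ^ k) i j / s ^ (k + c)) := by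
    intro i j c
    rw [← summable_nat_add_iff n₀]
    apply Summable.of_nonneg_of_le
    · intro k
      exact div_nonneg (powPos hB0 _ i j) (by positivity)
    · intro k
      show (B ^ (k + n₀)) i j / s ^ (k + n₀ + c) ≤ (1 / s ^ c) * (t / s) ^ (k + n₀)
      have hsne : s ≠ 0 := ne_of_gt hs0
      calc (B ^ (k + n₀)) i j / s ^ (k + n₀ + c)
          ≤ t ^ (k + n₀) / s ^ (k + n₀ + c) := by
            gcongr
            exact hb (k + n₀) (by omega) i j
        _ = (1 / s ^ c) * (t / s) ^ (k + n₀) := by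
            rw [div_pow, pow_add s, one_div, div_mul_eq_div_div,
              div_eq_mul_inv (t ^ (k + n₀) / s ^ (k + n₀)), mul_comm]
    · exact ((summable_nat_add_iff n₀).mpr hgeo).mul_left _
  -- the nonnegative candidate inverse
  set P : Matrix n n ℝ := Matrix.of (fun i j => ∑' k : ℕ, (B ^ k) i j / s ^ (k + 1)) with hP
  have hP0 : ∀ i j, 0 ≤ P i j := by
    intro i j
    exact tsum_nonneg fun k => div_nonneg (powPos hB0 k i j) (by positivity)
  have hPinv : ((1 : Matrix n n ℝ) - L) * P = 1 := by
    rw [hEq, sub_mul, Matrix.smul_mul, Matrix.one_mul]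
    ext i j
    have hBP : (B * P) i j = ∑' k : ℕ, (B ^ (k + 1)) i j / s ^ (k + 1) := by
      rw [Matrix.mul_apply]
      have h1 : ∀ l : n, B i l * P l j = ∑' k : ℕ, B i l * ((B ^ k) l j / s ^ (k + 1)) := by
        intro l
        rw [hP]
        exact (tsum_mul_left).symm
      simp_rw [h1]
      rw [← Summable.tsum_finsetSum (fun l _ => (hsum l j 1).mul_left _)]
      congr 1
      ext k
      rw [pow_succ' B k, Matrix.mul_apply, Finset.sum_div]
      exact Finset.sum_congr rfl fun l _ => by ring
    have hsP : (s • P) i j = ∑' k : ℕ, (B ^ k) i j / s ^ k := by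
      rw [Matrix.smul_apply, smul_eq_mul, hP]
      show s * ∑' k : ℕ, (B ^ k) i j / s ^ (k + 1) = _
      rw [← tsum_mul_left]
      congr 1
      ext k
      rw [pow_succ]
      field_simp
    rw [Matrix.sub_apply, hBP, hsP]
    have hf : Summable (fun k : ℕ => (B ^ k) i j / s ^ k) := by
      simpa using hsum i j 0
    rw [Summable.tsum_eq_zero_add hf]
    simp only [pow_zero, div_one, Nat.add_eq]
    ring_nf
    simp [Matrix.one_apply, mul_comm, mul_left_comm, mul_assoc]
  -- partial sums of powers of L are bounded by P
  have hSP : ∀ (N : ℕ) i j, (∑ k ∈ Finset.range N, (L ^ k) i j) ≤ P i j := by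
    intro N i j
    have hgs : (∑ k ∈ Finset.range N, L ^ k) * ((1 : Matrix n n ℝ) - L) = 1 - L ^ N := by
      have := geom_sum_mul L N
      calc (∑ k ∈ Finset.range N, L ^ k) * (1 - L)
          = -((∑ k ∈ Finset.range N, L ^ k) * (L - 1)) := by noncomm_ring
        _ = -(L ^ N - 1) := by rw [this]
        _ = 1 - L ^ N := by noncomm_ring
    have hkey : (∑ k ∈ Finset.range N, L ^ k) = P - L ^ N * P := by
      calc (∑ k ∈ Finset.range N, L ^ k)
          = (∑ k ∈ Finset.range N, L ^ k) * (((1 : Matrix n n ℝ) - L) * P) := by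
            rw [hPinv, Matrix.mul_one]
        _ = ((∑ k ∈ Finset.range N, L ^ k) * ((1 : Matrix n n ℝ) - L)) * P := by
            rw [Matrix.mul_assoc]
        _ = (1 - L ^ N) * P := by rw [hgs]
        _ = P - L ^ N * P := by rw [Matrix.sub_mul, Matrix.one_mul]
    have := congrFun (congrFun hkey i) j
    rw [Matrix.sum_apply] at this
    rw [this, Matrix.sub_apply]
    have : 0 ≤ (L ^ N * P) i j := mulPos (powPos hL0 N) hP0 i j
    linarith
  -- conclude
  intro i j
  have hsm : Summable (fun k : ℕ => (L ^ k) i j) :=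
    summable_of_sum_range_le (fun k => powPos hL0 k i j) (fun N => hSP N i j)
  exact hsm.tendsto_atTop_zero


variable {n : Type*} [Fintype n] [DecidableEq n]

lemma sum_mulVec' {β : Type*} (s : Finset β) (M : β → Matrix n n ℝ) (v : n → ℝ) (p : n) :
    ((∑ b ∈ s, M b) *ᵥ v) p = ∑ b ∈ s, (M b *ᵥ v) p := by
  simp only [Matrix.mulVec, dotProduct, Matrix.sum_apply, Finset.sum_mul]
  exact Finset.sum_comm

lemma kron_mulVec (Am C E : Matrix n n ℝ) (p : n × n) :
    ((Cᵀ ⊗ₖ Am) *ᵥ fun q : n × n => E q.2 q.1) p = (Am * E * C) p.2 p.1 := by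
  obtain ⟨p1, p2⟩ := p
  simp only [Matrix.mulVec, dotProduct]
  rw [Fintype.sum_prod_type]
  simp only [Matrix.kroneckerMap_apply, Matrix.transpose_apply]
  rw [Matrix.mul_apply]
  simp_rw [Matrix.mul_apply, Finset.sum_mul]
  exact Finset.sum_congr rfl fun l _ => Finset.sum_congr rfl fun k _ => by ring

end Stmt6Aux

open Stmt6Aux

theorem stmt6 (m N : ℕ) (hm : 1 ≤ m) (hN : 1 ≤ N)
    (A : ℕ → Matrix (Fin m) (Fin m) ℝ)
    (hA : ∀ v, v ≤ N → ∀ i j, 0 ≤ A v i j)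
    (G : Matrix (Fin m) (Fin m) ℝ)
    (hG0 : ∀ i j, 0 ≤ G i j)
    (hGsol : ∑ v ∈ Finset.range (N + 1), A v * G ^ v = G)
    (hGmin : ∀ S : Matrix (Fin m) (Fin m) ℝ, (∀ i j, 0 ≤ S i j) →
      ∑ v ∈ Finset.range (N + 1), A v * S ^ v = S → ∀ i j, G i j ≤ S i j)
    (X : Matrix (Fin m) (Fin m) ℝ)
    (hGX : ∀ i j, 0 ≤ (∑ v ∈ Finset.range (N + 1), A v * X ^ v - X) i j)
    (hX0 : ∀ i j, 0 ≤ X i j) (hXG : ∀ i j, X i j ≤ G i j)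
    (hMX : IsNonsingMMatrix
      ((1 : Matrix (Fin m × Fin m) (Fin m × Fin m) ℝ) -
      ∑ v ∈ Finset.Icc 1 N, ∑ j ∈ Finset.range v,
        (X ^ (v - 1 - j))ᵀ ⊗ₖ (A v * X ^ j)))
    (Z : Matrix (Fin m) (Fin m) ℝ)
    (hZ0 : ∀ i j, 0 ≤ Z i j) (hZX : ∀ i j, Z i j ≤ X i j)
    (Y : Matrix (Fin m) (Fin m) ℝ)
    (hY : ∑ v ∈ Finset.Icc 1 N, ∑ j ∈ Finset.range v,
        A v * Z ^ j * (Y - X) * Z ^ (v - 1 - j) - (Y - X) =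
      -(∑ v ∈ Finset.range (N + 1), A v * X ^ v - X)) :
    ∀ i j, 0 ≤ (∑ v ∈ Finset.range (N + 1), A v * Y ^ v - Y) i j := by
  classical
  obtain ⟨-, s, B, hB0, hEqM, hsB⟩ := hMX
  set E : Matrix (Fin m) (Fin m) ℝ := Y - X with hE
  set Gx : Matrix (Fin m) (Fin m) ℝ := ∑ v ∈ Finset.range (N + 1), A v * X ^ v - X with hGx
  have hE0' : ∀ i j, 0 ≤ X i j := hX0
  have hXk0 : ∀ k i j, 0 ≤ (X ^ k) i j := fun k => powPos hX0 k
  have hZk0 : ∀ k i j, 0 ≤ (Z ^ k) i j := fun k => powPos hZ0 k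
  have hYE : ∑ v ∈ Finset.Icc 1 N, ∑ k ∈ Finset.range v, A v * Z ^ k * E * Z ^ (v - 1 - k)
      = E - Gx := by
    rw [sub_eq_iff_eq_add] at hY
    rw [hY]
    abel
  -- Kronecker matrices
  set KZ : Matrix (Fin m × Fin m) (Fin m × Fin m) ℝ :=
    ∑ v ∈ Finset.Icc 1 N, ∑ j ∈ Finset.range v, (Z ^ (v - 1 - j))ᵀ ⊗ₖ (A v * Z ^ j) with hKZ
  set KX : Matrix (Fin m × Fin m) (Fin m × Fin m) ℝ :=
    ∑ v ∈ Finset.Icc 1 N, ∑ j ∈ Finset.range v, (X ^ (v - 1 - j))ᵀ ⊗ₖ (A v * X ^ j) with hKX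
  have hAv : ∀ v ∈ Finset.Icc 1 N, ∀ i j, 0 ≤ A v i j := by
    intro v hv
    exact hA v (Finset.mem_Icc.mp hv).2
  have hKZ0 : ∀ p q, 0 ≤ KZ p q := by
    rw [hKZ]
    apply sumPos
    intro v hv
    apply sumPos
    intro k _
    intro p q
    rw [Matrix.kroneckerMap_apply, Matrix.transpose_apply]
    exact mul_nonneg (hZk0 _ _ _) (mulPos (hAv v hv) (hZk0 k) _ _)
  have hKZX : ∀ p q, KZ p q ≤ KX p q := by
    rw [hKZ, hKX]
    apply sumMono
    intro v hv
    apply sumMono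
    intro k _
    intro p q
    rw [Matrix.kroneckerMap_apply, Matrix.kroneckerMap_apply, Matrix.transpose_apply,
      Matrix.transpose_apply]
    apply mul_le_mul (powMono hZ0 hZX _ _ _) (mulMonoL (hAv v hv) (powMono hZ0 hZX k) _ _)
      (mulPos (hAv v hv) (hZk0 k) _ _) (hXk0 _ _ _)
  have hKX0 : ∀ p q, 0 ≤ KX p q := fun p q => (hKZ0 p q).trans (hKZX p q)
  -- vectorization
  set e : Fin m × Fin m → ℝ := fun p => E p.2 p.1 with he
  have hvec : ∀ p, (KZ *ᵥ e) p = e p - Gx p.2 p.1 := by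
    intro p
    rw [hKZ, sum_mulVec']
    have h1 : ∀ v ∈ Finset.Icc 1 N,
        ((∑ j ∈ Finset.range v, (Z ^ (v - 1 - j))ᵀ ⊗ₖ (A v * Z ^ j)) *ᵥ e) p
        = (∑ k ∈ Finset.range v, A v * Z ^ k * E * Z ^ (v - 1 - k)) p.2 p.1 := by
      intro v _
      rw [sum_mulVec', Matrix.sum_apply]
      refine Finset.sum_congr rfl fun k _ => ?_
      rw [he]
      exact kron_mulVec (A v * Z ^ k) (Z ^ (v - 1 - k)) E p
    rw [Finset.sum_congr rfl h1, ← Matrix.sum_apply, hYE, Matrix.sub_apply]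
  have heK : ∀ p, (KZ *ᵥ e) p ≤ e p := by
    intro p
    rw [hvec p]
    have := hGX p.2 p.1
    linarith
  have hiter : ∀ k p, ((KZ ^ k) *ᵥ e) p ≤ e p := by
    intro k
    induction k with
    | zero => intro p; rw [pow_zero, Matrix.one_mulVec]
    | succ k ih =>
      intro p
      rw [pow_succ' KZ k, ← Matrix.mulVec_mulVec]
      calc (KZ *ᵥ ((KZ ^ k) *ᵥ e)) p
          ≤ (KZ *ᵥ e) p := by
            simp only [Matrix.mulVec, dotProduct]
            exact Finset.sum_le_sum fun q _ =>
              mul_le_mul_of_nonneg_left (ih q) (hKZ0 p q)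
        _ ≤ e p := heK p
  -- convergence of powers of KX
  have hLt : ∀ p q, Filter.Tendsto (fun k => (KX ^ k) p q) Filter.atTop (nhds 0) :=
    pow_tendsto_zero KX hKX0 s B hB0 hEqM hsB
  -- nonnegativity of E
  have hE0 : ∀ i j, 0 ≤ E i j := by
    intro i j
    have hp : ∀ k, -(∑ q, (KX ^ k) (j, i) q * |e q|) ≤ e (j, i) := by
      intro k
      refine le_trans ?_ (hiter k (j, i))
      have hterm : ∀ q : Fin m × Fin m,
          -((KX ^ k) (j, i) q * |e q|) ≤ (KZ ^ k) (j, i) q * e q := by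
        intro q
        have h1 : 0 ≤ (KZ ^ k) (j, i) q := powPos hKZ0 k _ _
        have h2 : (KZ ^ k) (j, i) q ≤ (KX ^ k) (j, i) q := powMono hKZ0 hKZX k _ _
        have h3 : (KZ ^ k) (j, i) q * (-|e q|) ≤ (KZ ^ k) (j, i) q * e q :=
          mul_le_mul_of_nonneg_left (neg_abs_le _) h1
        have h4 : (KX ^ k) (j, i) q * (-|e q|) ≤ (KZ ^ k) (j, i) q * (-|e q|) :=
          mul_le_mul_of_nonpos_right h2 (neg_nonpos.mpr (abs_nonneg _))
        nlinarith [h3, h4]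
      calc -(∑ q, (KX ^ k) (j, i) q * |e q|)
          = ∑ q, -((KX ^ k) (j, i) q * |e q|) := by rw [Finset.sum_neg_distrib]
        _ ≤ ∑ q, (KZ ^ k) (j, i) q * e q := Finset.sum_le_sum fun q _ => hterm q
        _ = ((KZ ^ k) *ᵥ e) (j, i) := rfl
    have ht : Filter.Tendsto (fun k => -(∑ q, (KX ^ k) (j, i) q * |e q|))
        Filter.atTop (nhds 0) := by
      have h := tendsto_finset_sum Finset.univ
        (fun q (_ : q ∈ Finset.univ) => (hLt (j, i) q).mul_const |e q|)
      simpa using h.neg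
    have := le_of_tendsto ht (Filter.Eventually.of_forall hp)
    simpa [he] using this
  -- final inequality
  intro i j
  have hYXE : Y = X + E := by rw [hE]; abel
  have hAv' : ∀ v ∈ Finset.range (N + 1), ∀ i j, 0 ≤ A v i j := by
    intro v hv
    exact hA v (Nat.lt_succ_iff.mp (Finset.mem_range.mp hv))
  have hvle : ∀ v ∈ Finset.range (N + 1), ∀ a b,
      (A v * X ^ v + ∑ k ∈ Finset.range v, A v * Z ^ k * E * Z ^ (v - 1 - k)) a b
        ≤ (A v * Y ^ v) a b := by
    intro v hv a b
    have hAvn := hAv' v hv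
    have step1 : ∀ k, ∀ a b, (A v * Z ^ k * E * Z ^ (v - 1 - k)) a b
        ≤ (A v * (X ^ k * E * X ^ (v - 1 - k))) a b := by
      intro k a b
      have s1 : ∀ a b, (A v * Z ^ k) a b ≤ (A v * X ^ k) a b :=
        mulMonoL hAvn (powMono hZ0 hZX k)
      have s2 : ∀ a b, (A v * Z ^ k * E) a b ≤ (A v * X ^ k * E) a b :=
        mulMonoR s1 hE0
      have s3 : ∀ a b, (A v * Z ^ k * E * Z ^ (v - 1 - k)) a b
          ≤ (A v * X ^ k * E * Z ^ (v - 1 - k)) a b :=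
        mulMonoR s2 (hZk0 _)
      have s4 : ∀ a b, (A v * X ^ k * E * Z ^ (v - 1 - k)) a b
          ≤ (A v * X ^ k * E * X ^ (v - 1 - k)) a b :=
        mulMonoL (mulPos (mulPos hAvn (hXk0 k)) hE0) (powMono hZ0 hZX _)
      have : A v * X ^ k * E * X ^ (v - 1 - k) = A v * (X ^ k * E * X ^ (v - 1 - k)) := by
        rw [Matrix.mul_assoc, Matrix.mul_assoc, Matrix.mul_assoc]
      rw [← this]
      exact ((s3 a b).trans (s4 a b))
    have hexp : A v * (X ^ v + ∑ k ∈ Finset.range v, X ^ k * E * X ^ (v - 1 - k))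
        = A v * X ^ v + ∑ k ∈ Finset.range v, A v * (X ^ k * E * X ^ (v - 1 - k)) := by
      rw [Matrix.mul_add, Finset.mul_sum]
    calc (A v * X ^ v + ∑ k ∈ Finset.range v, A v * Z ^ k * E * Z ^ (v - 1 - k)) a b
        ≤ (A v * X ^ v + ∑ k ∈ Finset.range v, A v * (X ^ k * E * X ^ (v - 1 - k))) a b := by
          rw [Matrix.add_apply, Matrix.add_apply]
          exact add_le_add le_rfl (sumMono (fun k _ => step1 k) a b)
      _ = (A v * (X ^ v + ∑ k ∈ Finset.range v, X ^ k * E * X ^ (v - 1 - k))) a b := by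
          rw [hexp]
      _ ≤ (A v * (X + E) ^ v) a b := mulMonoL hAvn (pow_add_lower hX0 hE0 v) a b
      _ = (A v * Y ^ v) a b := by rw [← hYXE]
  have hsum1 := sumMono hvle i j
  rw [Finset.sum_add_distrib] at hsum1
  have hsubset : ∑ v ∈ Finset.Icc 1 N, ∑ k ∈ Finset.range v, A v * Z ^ k * E * Z ^ (v - 1 - k)
      = ∑ v ∈ Finset.range (N + 1), ∑ k ∈ Finset.range v, A v * Z ^ k * E * Z ^ (v - 1 - k) := by
    apply Finset.sum_subset
    · intro v hv
      rw [Finset.mem_Icc] at hv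
      rw [Finset.mem_range]
      omega
    · intro v hv hvn
      rw [Finset.mem_range] at hv
      rw [Finset.mem_Icc] at hvn
      have : v = 0 := by omega
      rw [this]
      simp
  rw [← hsubset] at hsum1
  rw [Matrix.add_apply] at hsum1
  -- put everything together
  have h2 := congrFun (congrFun hYE i) j
  rw [Matrix.sub_apply] at h2
  have hGxij : Gx i j = (∑ v ∈ Finset.range (N + 1), A v * X ^ v) i j - X i j := by
    rw [hGx, Matrix.sub_apply]
  have hYij : Y i j = X i j + E i j := by rw [hYXE, Matrix.add_apply]
  rw [Matrix.sub_apply]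
  linarith [hsum1, h2, hGxij, hYij]
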